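/- arXiv:1301.1203 — 4 statements merged into one kernel-verified Lean document; each statement's English description precedes it below -/
import Mathlib

section
/- Two elements a, b of a T-set satisfying the postulate of materialism are compatible (a↾Eb = b↾Ea) if and only if Ea ∧ Eb = Id(a,b). -/
/-- Two elements `a, b` of a separated T-set satisfying the postulate of
materialism are compatible (`a↾Eb = b↾Ea`) iff `Ea ∧ Eb = Id(a,b)`. -/
theorem compatible_iff {T : Type*} [Order.Frame T] {A : Type*}
    (Id : A → A → T)
    (hsym : ∀ x y, Id x y = Id y x)
    (htrans : ∀ x y z, Id x y ⊓ Id y z ≤ Id x z)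
    (hreal : ∀ a : A → T, (∀ x y, a x ⊓ Id x y ≤ a y) → (∀ x y, a x ⊓ a y ≤ Id x y) →
      ∃ x : A, ∀ y, a y = Id x y)
    (hsep : ∀ x y : A, (∀ z, Id x z = Id y z) → x = y)
    (loc : A → T → A)
    (hloc : ∀ x p y, Id (loc x p) y = Id x y ⊓ p)
    (a b : A) :
    loc a (Id b b) = loc b (Id a a) ↔ Id a a ⊓ Id b b = Id a b := by
  have hle : ∀ x y : A, Id x y ≤ Id x x := by
    intro x y
    have := htrans x y x
    rw [hsym y x] at this
    simpa using this
  constructor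
  · intro h
    have h1 := congrArg (fun z => Id z b) h
    simp only [hloc] at h1
    -- h1 : Id a b ⊓ Id b b = Id b b ⊓ Id a a
    have h2 : Id a b ⊓ Id b b = Id a b := by
      have : Id a b ≤ Id b b := by rw [hsym]; exact hle b a
      exact inf_eq_left.mpr this
    rw [h2] at h1
    rw [inf_comm, ← h1]
  · intro h
    apply hsep
    intro z
    rw [hloc, hloc]
    apply le_antisymm
    · refine le_inf ?_ ?_
      · calc Id a z ⊓ Id b b = (Id a z ⊓ Id a a) ⊓ Id b b := by
              rw [inf_eq_left.mpr (hle a z)]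
          _ = Id a z ⊓ (Id a a ⊓ Id b b) := by rw [inf_assoc]
          _ = Id a z ⊓ Id a b := by rw [h]
          _ ≤ Id b z := by
              rw [inf_comm, hsym a b]; exact htrans b a z
      · exact inf_le_left.trans (hle a z)
    · refine le_inf ?_ ?_
      · calc Id b z ⊓ Id a a = (Id b z ⊓ Id b b) ⊓ Id a a := by
              rw [inf_eq_left.mpr (hle b z)]
          _ = Id b z ⊓ (Id a a ⊓ Id b b) := by rw [inf_assoc, inf_comm (Id b b)]
          _ = Id b z ⊓ Id a b := by rw [h]
          _ ≤ Id a z := by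
              rw [inf_comm]; exact htrans a b z
      · exact inf_le_left.trans (hle b z)
end

section
/- In a T-set satisfying the postulate of materialism, the following are equivalent for elements a, b: (1) a = b↾Ea; (2) a ‡ b and Ea ≤ Eb; (3) Ea = Id(a,b). -/
/-- In a separated T-set with all atoms real, the following are equivalent:
(1) `a = b↾Ea`; (2) `a ‡ b` and `Ea ≤ Eb`; (3) `Ea = Id(a,b)`. -/
theorem order_tfae {T : Type*} [Order.Frame T] {A : Type*}
    (Id : A → A → T)
    (hsym : ∀ x y, Id x y = Id y x)
    (htrans : ∀ x y z, Id x y ⊓ Id y z ≤ Id x z)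
    (hreal : ∀ a : A → T, (∀ x y, a x ⊓ Id x y ≤ a y) → (∀ x y, a x ⊓ a y ≤ Id x y) →
      ∃ x : A, ∀ y, a y = Id x y)
    (hsep : ∀ x y : A, (∀ z, Id x z = Id y z) → x = y)
    (loc : A → T → A)
    (hloc : ∀ x p y, Id (loc x p) y = Id x y ⊓ p)
    (a b : A) :
    List.TFAE [a = loc b (Id a a),
      loc a (Id b b) = loc b (Id a a) ∧ Id a a ≤ Id b b,
      Id a a = Id a b] := by
  have hle : ∀ x y : A, Id x y ≤ Id x x := fun x y =>
    le_trans (by rw [hsym y x]; exact le_inf le_rfl le_rfl) (htrans x y x)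
  tfae_have 1 → 3 := by
    intro h1
    have hab : Id a b = Id b b ⊓ Id a a := by
      conv_lhs => rw [h1]
      rw [hloc]
    have haa : Id a a = Id b b ⊓ Id a a := by
      conv_lhs => rw [h1]
      rw [hloc, hsym b, hloc, inf_assoc, inf_idem]
    exact haa.trans hab.symm
  tfae_have 3 → 2 := by
    intro h3
    have hEab : Id a a ≤ Id b b := h3 ▸ (by rw [hsym]; exact hle b a)
    refine ⟨hsep _ _ fun z => ?_, hEab⟩
    rw [hloc, hloc]
    have hL : Id a z ⊓ Id b b = Id a z := inf_eq_left.mpr (le_trans (hle a z) hEab)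
    have hbz : Id a z ≤ Id b z :=
      le_trans (le_inf ((hle a z).trans (h3.le.trans (hsym a b).le)) le_rfl) (htrans b a z)
    have hR : Id b z ⊓ Id a a = Id a z := by
      apply le_antisymm
      · rw [h3, inf_comm]
        exact htrans a b z
      · exact le_inf hbz (hle a z)
    rw [hL, hR]
  tfae_have 2 → 1 := by
    rintro ⟨h2, hEab⟩
    rw [← h2]
    apply hsep
    intro z
    rw [hloc]
    exact (inf_eq_left.mpr ((hle a z).trans hEab)).symm
  tfae_finish
end

section
/- If B ⊆ A is a set of pairwise compatible elements of a T-set (A, Id), then π(x) := sup{Id(b,x) | b ∈ B} is an atom of A. -/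
/-- If `B ⊆ A` is a set of pairwise compatible elements of a T-set `(A, Id)`,
then `π(x) := sup {Id(b,x) | b ∈ B}` is an atom of `A`. -/
theorem envelope_is_atom {T : Type*} [Order.Frame T] {A : Type*}
    (Id : A → A → T)
    (hsym : ∀ x y, Id x y = Id y x)
    (htrans : ∀ x y z, Id x y ⊓ Id y z ≤ Id x z)
    (B : Set A)
    (hcompat : ∀ b ∈ B, ∀ b' ∈ B, Id b b ⊓ Id b' b' = Id b b') :
    (∀ x y, sSup {t : T | ∃ b ∈ B, t = Id b x} ⊓ Id x y ≤
      sSup {t : T | ∃ b ∈ B, t = Id b y}) ∧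
    (∀ x y, sSup {t : T | ∃ b ∈ B, t = Id b x} ⊓ sSup {t : T | ∃ b ∈ B, t = Id b y} ≤
      Id x y) := by
  have hE : ∀ b x, Id b x ≤ Id b b := by
    intro b x
    have := htrans b x b
    rw [hsym x b] at this
    simpa using this
  constructor
  · intro x y
    rw [sSup_inf_eq]
    refine iSup₂_le ?_
    rintro t ⟨b, hb, rfl⟩
    exact le_sSup_of_le ⟨b, hb, rfl⟩ (htrans b x y)
  · intro x y
    rw [sSup_inf_eq]
    refine iSup₂_le ?_
    rintro t ⟨b, hb, rfl⟩
    rw [inf_sSup_eq]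
    refine iSup₂_le ?_
    rintro t' ⟨b', hb', rfl⟩
    -- Id b x ⊓ Id b' y ≤ Id x y
    have h1 : Id b x ⊓ Id b' y ≤ Id b b' := by
      rw [← hcompat b hb b' hb']
      exact inf_le_inf (hE b x) (hE b' y)
    have h2 : Id b x ⊓ Id b' y ≤ Id x b' := by
      have h3 := htrans x b b'
      rw [hsym x b] at h3
      exact le_trans (le_inf inf_le_left h1) h3
    calc Id b x ⊓ Id b' y ≤ Id x b' ⊓ Id b' y := le_inf h2 inf_le_right
      _ ≤ Id x y := htrans x b' y
end

section
/- If B is a pairwise compatible subset of a T-set satisfying the postulate of materialism and ε is the real element representing the atom π(x) = sup{Id(b,x) | b ∈ B}, then Eε = sup{Eb | b ∈ B}, and ε is the least upper bound of B in the order a ≤ b ⟺ Ea = Id(a,b). -/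
/-- If `B` is a pairwise compatible subset of a separated T-set with all atoms
real and `ε` is the real element representing the atom
`π(x) = sup {Id(b,x) | b ∈ B}`, then `Eε = sup {Eb | b ∈ B}` and `ε` is the
least upper bound of `B` in the order `a ≤ b ⟺ Ea = Id(a,b)`. -/
theorem envelope_is_lub {T : Type*} [Order.Frame T] {A : Type*}
    (Id : A → A → T)
    (hsym : ∀ x y, Id x y = Id y x)
    (htrans : ∀ x y z, Id x y ⊓ Id y z ≤ Id x z)
    (hreal : ∀ a : A → T, (∀ x y, a x ⊓ Id x y ≤ a y) → (∀ x y, a x ⊓ a y ≤ Id x y) →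
      ∃ x : A, ∀ y, a y = Id x y)
    (hsep : ∀ x y : A, (∀ z, Id x z = Id y z) → x = y)
    (B : Set A)
    (hcompat : ∀ b ∈ B, ∀ b' ∈ B, Id b b ⊓ Id b' b' = Id b b')
    (ε : A)
    (hε : ∀ y, Id ε y = sSup {t : T | ∃ b ∈ B, t = Id b y}) :
    Id ε ε = sSup {t : T | ∃ b ∈ B, t = Id b b} ∧
    (∀ b ∈ B, Id b b = Id b ε) ∧
    (∀ c : A, (∀ b ∈ B, Id b b = Id b c) → Id ε ε = Id ε c) := by
  -- key: for b ∈ B, Id b ε = Id b b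
  have key : ∀ b ∈ B, Id b ε = Id b b := by
    intro b hb
    rw [hsym, hε b]
    apply le_antisymm
    · apply sSup_le
      rintro t ⟨b', hb', rfl⟩
      rw [← hcompat b' hb' b hb]
      exact inf_le_right
    · exact le_sSup ⟨b, hb, rfl⟩
  refine ⟨?_, fun b hb => (key b hb).symm, ?_⟩
  · rw [hε ε]
    congr 1
    ext t
    constructor
    · rintro ⟨b, hb, rfl⟩; exact ⟨b, hb, key b hb⟩
    · rintro ⟨b, hb, rfl⟩; exact ⟨b, hb, (key b hb).symm⟩
  · intro c hc
    rw [hε c, hε ε]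
    congr 1
    ext t
    constructor
    · rintro ⟨b, hb, rfl⟩; exact ⟨b, hb, (key b hb).trans (hc b hb)⟩
    · rintro ⟨b, hb, rfl⟩; exact ⟨b, hb, (hc b hb).symm.trans (key b hb).symm⟩
end
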